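/- arXiv:2311.07522 — 3 statements merged into one kernel-verified Lean document; each statement's English description precedes it below -/
import Mathlib

section
/- For every integer n ≥ 2, the map sending a family (λ_{a,b}) of nonnegative integers, indexed by pairs a,b ≥ 1 with a+b ≤ n, to the matrix Σ_{a+b≤n} λ_{a,b} · NESW(a×b) is a bijection from ℕ^{n(n−1)/2} onto the set of n×n matrices with entries in ℕ that are symmetric, have all diagonal entries zero, and have the Monge property. -/
open Finset

/-- The Monge property for an `n × n` matrix with `ℕ` entries (indices are 0-based). -/
def IsMongeNat {n : ℕ} (C : Matrix (Fin n) (Fin n) ℕ) : Prop :=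
  ∀ i I j J : Fin n, i < I → j < J → C i j + C I J ≤ C i J + C I j

/-- `NESW n a b` is the `n × n` 0/1 matrix (over `ℕ`) whose (1-based) `(k, l)` entry is 1 iff
`(k ≤ a ∧ l > n - b) ∨ (k > n - b ∧ l ≤ a)`. -/
def NESW (n a b : ℕ) : Matrix (Fin n) (Fin n) ℕ :=
  Matrix.of fun k l =>
    if (k.val + 1 ≤ a ∧ n - b < l.val + 1) ∨ (n - b < k.val + 1 ∧ l.val + 1 ≤ a) then 1 else 0

/-- The index set of pairs `(a, b)` with `a, b ≥ 1` and `a + b ≤ n`; it has `n(n-1)/2`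
elements. -/
def idx (n : ℕ) : Finset (ℕ × ℕ) :=
  (Finset.range (n + 1) ×ˢ Finset.range (n + 1)).filter
    fun ab => 1 ≤ ab.1 ∧ 1 ≤ ab.2 ∧ ab.1 + ab.2 ≤ n

lemma mem_idx {n : ℕ} {ab : ℕ × ℕ} :
    ab ∈ idx n ↔ 1 ≤ ab.1 ∧ 1 ≤ ab.2 ∧ ab.1 + ab.2 ≤ n := by
  simp only [idx, Finset.mem_filter, Finset.mem_product, Finset.mem_range]; omega

/-- Cumulative "staircase" sums of a family of coefficients. -/
def Sfun (n : ℕ) (lam : ℕ × ℕ → ℕ) (i j : ℕ) : ℕ :=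
  ∑ ab ∈ (idx n).filter (fun ab => i ≤ ab.1 ∧ j ≤ ab.2), lam ab

lemma Sfun_eq_zero {n i j : ℕ} (lam : ℕ × ℕ → ℕ) (h : n < i + j) :
    Sfun n lam i j = 0 := by
  rw [Sfun, Finset.sum_filter]
  refine Finset.sum_eq_zero fun ab hab => ?_
  have h' := mem_idx.mp hab
  rw [if_neg]; omega

lemma entry_eq (n : ℕ) (lam : ℕ × ℕ → ℕ) (k l : Fin n) :
    (∑ ab ∈ idx n, lam ab • NESW n ab.1 ab.2) k l
      = Sfun n lam (k.val + 1) (n - l.val) + Sfun n lam (l.val + 1) (n - k.val) := by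
  rw [Matrix.sum_apply]
  rw [Sfun, Sfun, Finset.sum_filter, Finset.sum_filter, ← Finset.sum_add_distrib]
  refine Finset.sum_congr rfl fun ab hab => ?_
  have h' := mem_idx.mp hab
  have hk := k.isLt
  have hl := l.isLt
  simp only [NESW, Matrix.smul_apply, Matrix.of_apply, smul_eq_mul, mul_ite, mul_one, mul_zero]
  split_ifs <;> omega

lemma lam_single {n : ℕ} (lam : ℕ × ℕ → ℕ) {a b : ℕ} (h : (a, b) ∈ idx n) :
    lam (a, b) = ∑ x ∈ idx n, if x.1 = a ∧ x.2 = b then lam x else 0 := by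
  rw [show (∑ x ∈ idx n, if x.1 = a ∧ x.2 = b then lam x else 0)
      = ∑ x ∈ idx n, if x = (a, b) then lam x else 0 from
    Finset.sum_congr rfl fun x _ => by rcases x with ⟨x1, x2⟩; simp [Prod.ext_iff],
    Finset.sum_ite_eq' (idx n) (a, b) lam, if_pos h]

lemma key_id (n : ℕ) (lam : ℕ × ℕ → ℕ) (a b : ℕ) (ha : 1 ≤ a) (hb : 1 ≤ b)
    (hab : a + b ≤ n) :
    lam (a, b) + Sfun n lam (a + 1) b + Sfun n lam a (b + 1)
      = Sfun n lam a b + Sfun n lam (a + 1) (b + 1) := by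
  have h0 : (a, b) ∈ idx n := mem_idx.mpr ⟨ha, hb, hab⟩
  simp only [Sfun, Finset.sum_filter]
  rw [lam_single lam h0, ← Finset.sum_add_distrib, ← Finset.sum_add_distrib,
    ← Finset.sum_add_distrib]
  refine Finset.sum_congr rfl fun x hx => ?_
  have hx' := mem_idx.mp hx
  split_ifs <;> omega

lemma nesw_monge (n a b : ℕ) (hab : a + b ≤ n) : IsMongeNat (NESW n a b) := by
  intro i I j J hiI hjJ
  have h1 : (i : ℕ) < I := hiI
  have h2 : (j : ℕ) < J := hjJ
  simp only [NESW, Matrix.of_apply]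
  split_ifs <;> omega

lemma monge_sum (n : ℕ) (lam : ℕ × ℕ → ℕ) :
    IsMongeNat (∑ ab ∈ idx n, lam ab • NESW n ab.1 ab.2) := by
  intro i I j J hiI hjJ
  simp only [Matrix.sum_apply, Matrix.smul_apply, smul_eq_mul]
  rw [← Finset.sum_add_distrib, ← Finset.sum_add_distrib]
  refine Finset.sum_le_sum fun ab hab => ?_
  have h := nesw_monge n ab.1 ab.2 (mem_idx.mp hab).2.2 i I j J hiI hjJ
  rw [← Nat.mul_add, ← Nat.mul_add]
  exact Nat.mul_le_mul_left _ h

lemma S_of_entry (n : ℕ) (lam : ℕ × ℕ → ℕ) (i j : ℕ) (hi : 1 ≤ i) (hj : 1 ≤ j)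
    (hij : i + j ≤ n) :
    Sfun n lam i j
      = (∑ ab ∈ idx n, lam ab • NESW n ab.1 ab.2) ⟨i - 1, by omega⟩ ⟨n - j, by omega⟩ := by
  rw [entry_eq]
  show Sfun n lam i j
      = Sfun n lam (i - 1 + 1) (n - (n - j)) + Sfun n lam (n - j + 1) (n - (i - 1))
  rw [show i - 1 + 1 = i from by omega, show n - (n - j) = j from by omega,
    Sfun_eq_zero (i := n - j + 1) (j := n - (i - 1)) lam (by omega), add_zero]

/-- Extension of a matrix to all of `ℕ × ℕ` by zero. -/
def Cext {n : ℕ} (C : Matrix (Fin n) (Fin n) ℕ) (k l : ℕ) : ℕ :=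
  if h : k < n ∧ l < n then C ⟨k, h.1⟩ ⟨l, h.2⟩ else 0

lemma Cext_apply {n : ℕ} (C : Matrix (Fin n) (Fin n) ℕ) (k l : Fin n) :
    Cext C k.val l.val = C k l := by
  simp [Cext, k.isLt, l.isLt]

lemma Cext_monge {n : ℕ} {C : Matrix (Fin n) (Fin n) ℕ} (hm : IsMongeNat C)
    {k K l L : ℕ} (hkK : k < K) (hlL : l < L) (hK : K < n) (hL : L < n) :
    Cext C k l + Cext C K L ≤ Cext C k L + Cext C K l := by
  have hk : k < n := lt_trans hkK hK
  have hl : l < n := lt_trans hlL hL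
  have := hm ⟨k, hk⟩ ⟨K, hK⟩ ⟨l, hl⟩ ⟨L, hL⟩ hkK hlL
  simpa [Cext, hk, hK, hl, hL] using this

/-- The inverse transform: entries of `C` read along the anti-diagonal coordinates. -/
def Tmat {n : ℕ} (C : Matrix (Fin n) (Fin n) ℕ) (i j : ℕ) : ℕ :=
  if 1 ≤ i ∧ 1 ≤ j ∧ i + j ≤ n then Cext C (i - 1) (n - j) else 0

/-- The coefficients reconstructed from a matrix (a discrete mixed second difference). -/
def lamOf {n : ℕ} (C : Matrix (Fin n) (Fin n) ℕ) (ab : ℕ × ℕ) : ℕ :=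
  if 1 ≤ ab.1 ∧ 1 ≤ ab.2 ∧ ab.1 + ab.2 ≤ n then
    Tmat C ab.1 ab.2 + Tmat C (ab.1 + 1) (ab.2 + 1)
      - Tmat C (ab.1 + 1) ab.2 - Tmat C ab.1 (ab.2 + 1)
  else 0

lemma T_monge {n : ℕ} {C : Matrix (Fin n) (Fin n) ℕ} (hdiag : ∀ i, C i i = 0)
    (hm : IsMongeNat C) (i j : ℕ) (hi : 1 ≤ i) (hj : 1 ≤ j) (hij : i + j ≤ n) :
    Tmat C (i + 1) j + Tmat C i (j + 1) ≤ Tmat C i j + Tmat C (i + 1) (j + 1) := by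
  have hd : ∀ k, k < n → Cext C k k = 0 := by
    intro k hk; simpa [Cext, hk] using hdiag ⟨k, hk⟩
  rcases Nat.lt_or_ge (i + j + 1) n with hlt | hge
  · have h1 : Tmat C (i + 1) j = Cext C i (n - j) := by
      rw [Tmat, if_pos ⟨by omega, hj, by omega⟩]; simp
    have h2 : Tmat C i (j + 1) = Cext C (i - 1) (n - (j + 1)) := by
      rw [Tmat, if_pos ⟨hi, by omega, by omega⟩]
    have h3 : Tmat C i j = Cext C (i - 1) (n - j) := by
      rw [Tmat, if_pos ⟨hi, hj, hij⟩]
    have h4 : Tmat C (i + 1) (j + 1) = Cext C i (n - (j + 1)) := by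
      rw [Tmat, if_pos ⟨by omega, by omega, by omega⟩]; simp
    have hM := Cext_monge hm (show i - 1 < i by omega)
      (show n - (j + 1) < n - j by omega) (show i < n by omega) (show n - j < n by omega)
    omega
  · rcases Nat.lt_or_ge (i + j) n with heq | hgt
    · have hn : i + j + 1 = n := by omega
      have h1 : Tmat C (i + 1) j = Cext C i (n - j) := by
        rw [Tmat, if_pos ⟨by omega, hj, by omega⟩]; simp
      have h2 : Tmat C i (j + 1) = Cext C (i - 1) (n - (j + 1)) := by
        rw [Tmat, if_pos ⟨hi, by omega, by omega⟩]
      have h3 : Tmat C i j = Cext C (i - 1) (n - j) := by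
        rw [Tmat, if_pos ⟨hi, hj, hij⟩]
      have h4 : Tmat C (i + 1) (j + 1) = 0 := by
        rw [Tmat, if_neg]; omega
      have hM := Cext_monge hm (show i - 1 < i by omega)
        (show n - (j + 1) < n - j by omega) (show i < n by omega) (show n - j < n by omega)
      have hz : Cext C i (n - (j + 1)) = 0 := by
        have : n - (j + 1) = i := by omega
        rw [this]; exact hd i (by omega)
      omega
    · have h1 : Tmat C (i + 1) j = 0 := by rw [Tmat, if_neg]; omega
      have h2 : Tmat C i (j + 1) = 0 := by rw [Tmat, if_neg]; omega
      omega

lemma card_idx (n : ℕ) : (idx n).card = n * (n - 1) / 2 := by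
  rw [idx, Finset.card_filter, Finset.sum_product]
  have inner : ∀ a : ℕ,
      (∑ b ∈ Finset.range (n + 1), if 1 ≤ a ∧ 1 ≤ b ∧ a + b ≤ n then 1 else 0)
        = if 1 ≤ a then n - a else 0 := by
    intro a
    rcases Nat.eq_zero_or_pos a with ha | ha
    · subst ha; simp
    rw [if_pos (show 1 ≤ a from ha)]
    rw [show (∑ b ∈ Finset.range (n + 1), if 1 ≤ a ∧ 1 ≤ b ∧ a + b ≤ n then 1 else 0)
        = ((Finset.range (n + 1)).filter fun b => 1 ≤ a ∧ 1 ≤ b ∧ a + b ≤ n).card from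
      (Finset.card_filter _ _).symm]
    rw [show ((Finset.range (n + 1)).filter fun b => 1 ≤ a ∧ 1 ≤ b ∧ a + b ≤ n)
        = Finset.Ico 1 (n - a + 1) from Finset.ext fun b => by
      simp only [Finset.mem_filter, Finset.mem_range, Finset.mem_Ico]; omega]
    rw [Nat.card_Ico]; omega
  rw [Finset.sum_congr rfl fun a _ => inner a, Finset.sum_range_succ']
  simp only [Nat.le_add_left 1, if_true, Nat.not_succ_le_zero, if_false, add_zero]
  rw [Finset.sum_congr rfl (fun i (hi : i ∈ Finset.range n) =>
      show n - (i + 1) = (fun j => j) (n - 1 - i) by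
        have := Finset.mem_range.mp hi; simp; omega),
    Finset.sum_range_reflect (fun j => j) n, Finset.sum_range_id]
  simp


/-- The map `(λ_{a,b}) ↦ Σ λ_{a,b} • NESW (a × b)` is a bijection from families of
nonnegative integers indexed by `idx n` onto the set of hollow symmetric Monge matrices
with entries in `ℕ`.  (The index set `idx n` has exactly `n(n-1)/2` elements.) -/
theorem hollow_symmetric_monge_nat_bijection (n : ℕ) (hn : 2 ≤ n) :
    Set.BijOn (fun lam : ℕ × ℕ → ℕ => ∑ ab ∈ idx n, lam ab • NESW n ab.1 ab.2)
      {lam | ∀ ab ∉ idx n, lam ab = 0}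
      {C : Matrix (Fin n) (Fin n) ℕ | C.IsSymm ∧ (∀ i, C i i = 0) ∧ IsMongeNat C} ∧
    (idx n).card = n * (n - 1) / 2 := by
  refine ⟨⟨?_, ?_, ?_⟩, card_idx n⟩
  · -- MapsTo
    intro lam _
    dsimp only
    refine ⟨?_, ?_, monge_sum n lam⟩
    · show Matrix.transpose _ = _
      apply Matrix.ext; intro k l
      rw [Matrix.transpose_apply, entry_eq, entry_eq, add_comm]
    · intro k
      have hk := k.isLt
      rw [entry_eq, Sfun_eq_zero lam (by omega)]
  · -- InjOn
    intro lam1 h1 lam2 h2 heq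
    have heq' : (∑ ab ∈ idx n, lam1 ab • NESW n ab.1 ab.2)
        = (∑ ab ∈ idx n, lam2 ab • NESW n ab.1 ab.2) := heq
    have hSS : ∀ i j, 1 ≤ i → 1 ≤ j → Sfun n lam1 i j = Sfun n lam2 i j := by
      intro i j hi hj
      rcases le_or_gt (i + j) n with h | h
      · rw [S_of_entry n lam1 i j hi hj h, S_of_entry n lam2 i j hi hj h, heq']
      · rw [Sfun_eq_zero _ h, Sfun_eq_zero _ h]
    funext ab
    rcases ab with ⟨a, b⟩
    by_cases hmem : (a, b) ∈ idx n
    · obtain ⟨ha, hb, hab⟩ := mem_idx.mp hmem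
      have k1 := key_id n lam1 a b ha hb hab
      have k2 := key_id n lam2 a b ha hb hab
      have e1 := hSS a b ha hb
      have e2 := hSS (a + 1) b (by omega) hb
      have e3 := hSS a (b + 1) ha (by omega)
      have e4 := hSS (a + 1) (b + 1) (by omega) (by omega)
      omega
    · rw [h1 _ hmem, h2 _ hmem]
  · -- SurjOn
    intro C hC
    obtain ⟨hsym, hdiag, hmonge⟩ := hC
    refine ⟨lamOf C, fun ab hab => ?_, ?_⟩
    · rw [lamOf, if_neg (fun h => hab (mem_idx.mpr h))]
    · have hT := T_monge hdiag hmonge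
      have hS : ∀ m i j, 1 ≤ i → 1 ≤ j → n < i + j + m →
          Sfun n (lamOf C) i j = Tmat C i j := by
        intro m
        induction m with
        | zero =>
          intro i j hi hj hm
          rw [Sfun_eq_zero _ (by omega), Tmat, if_neg (by omega)]
        | succ m ih =>
          intro i j hi hj hm
          rcases Nat.lt_or_ge n (i + j) with hij | hij
          · rw [Sfun_eq_zero _ hij, Tmat, if_neg (by omega)]
          · have hB := key_id n (lamOf C) i j hi hj hij
            have e2 := ih (i + 1) j (by omega) hj (by omega)
            have e3 := ih i (j + 1) hi (by omega) (by omega)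
            have e4 := ih (i + 1) (j + 1) (by omega) (by omega) (by omega)
            have hl : lamOf C (i, j) = Tmat C i j + Tmat C (i + 1) (j + 1)
                - Tmat C (i + 1) j - Tmat C i (j + 1) := by
              rw [lamOf, if_pos ⟨hi, hj, hij⟩]
            have ht := hT i j hi hj hij
            omega
      show (∑ ab ∈ idx n, lamOf C ab • NESW n ab.1 ab.2) = C
      apply Matrix.ext; intro k l
      rw [entry_eq]
      have hk := k.isLt; have hl := l.isLt
      rcases lt_trichotomy k.val l.val with h | h | h
      · rw [hS (n + 1) (k.val + 1) (n - l.val) (by omega) (by omega) (by omega),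
          hS (n + 1) (l.val + 1) (n - k.val) (by omega) (by omega) (by omega),
          Tmat, if_pos ⟨by omega, by omega, by omega⟩, Tmat, if_neg (by omega), add_zero,
          show n - (n - l.val) = l.val from by omega]
        simp only [Nat.add_sub_cancel]
        exact Cext_apply C k l
      · rw [Sfun_eq_zero _ (by omega), Sfun_eq_zero _ (by omega),
          show l = k from Fin.ext h.symm]
        exact (hdiag k).symm
      · rw [hS (n + 1) (k.val + 1) (n - l.val) (by omega) (by omega) (by omega),
          hS (n + 1) (l.val + 1) (n - k.val) (by omega) (by omega) (by omega),
          Tmat, if_neg (by omega), Tmat, if_pos ⟨by omega, by omega, by omega⟩, zero_add,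
          show n - (n - k.val) = k.val from by omega]
        simp only [Nat.add_sub_cancel]
        rw [Cext_apply C l k]
        exact hsym.apply k l
end

section
/- For every integer n ≥ 2, the map sending a pair of families of nonnegative integers ((λ_{a,b})_{a,b≥1, a+b≤n}, (λ_i)_{1≤i≤n}) to the matrix Σ_{a+b≤n} λ_{a,b} · NESW(a×b) + Σ_{i=1}^n λ_i · HV(i) is a bijection onto the set of n×n matrices with entries in ℕ that are symmetric, have all diagonal entries even, and have the Monge property. -/
open Finset

/-- `HV n i` is the `n × n` matrix (over `ℕ`) whose (1-based) `(k, l)` entry is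
`[k = i] + [l = i]` (so the `(i, i)` entry is 2). -/
def HV (n i : ℕ) : Matrix (Fin n) (Fin n) ℕ :=
  Matrix.of fun k l =>
    (if k.val + 1 = i then 1 else 0) + (if l.val + 1 = i then 1 else 0)

def entN {n : ℕ} (C : Matrix (Fin n) (Fin n) ℕ) (i j : ℕ) : ℕ :=
  if h : i < n ∧ j < n then C ⟨i, h.1⟩ ⟨j, h.2⟩ else 0

lemma entN_lt {n : ℕ} (C : Matrix (Fin n) (Fin n) ℕ) {i j : ℕ} (hi : i < n) (hj : j < n) :
    entN C i j = C ⟨i, hi⟩ ⟨j, hj⟩ := dif_pos ⟨hi, hj⟩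

def muZ {n : ℕ} (C : Matrix (Fin n) (Fin n) ℕ) (p q : ℕ) : ℤ :=
  ((entN C (p-1) q : ℤ) + (entN C p (q-1) : ℤ)) -
    ((entN C (p-1) (q-1) : ℤ) + (entN C p q : ℤ))

def ginv (n : ℕ) (C : Matrix (Fin n) (Fin n) ℕ) : (ℕ × ℕ → ℕ) × (ℕ → ℕ) :=
  (fun ab => if ab ∈ idx n then
      (if ab.1 + ab.2 = n then (muZ C ab.1 (n - ab.2)).toNat / 2
       else (muZ C ab.1 (n - ab.2)).toNat)
    else 0,
   fun i => if i ∈ Finset.Icc 1 n then entN C (i-1) (i-1) / 2 else 0)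

lemma entN_sum {n : ℕ} {α : Type*} {s : Finset α} (f : α → Matrix (Fin n) (Fin n) ℕ)
    (i j : ℕ) : entN (∑ x ∈ s, f x) i j = ∑ x ∈ s, entN (f x) i j := by
  unfold entN
  split_ifs with h
  · simp [Matrix.sum_apply]
  · simp

lemma entN_add {n : ℕ} (A B : Matrix (Fin n) (Fin n) ℕ) (i j : ℕ) :
    entN (A + B) i j = entN A i j + entN B i j := by
  unfold entN; split_ifs with h <;> simp [Matrix.add_apply]

lemma entN_smul {n : ℕ} (c : ℕ) (A : Matrix (Fin n) (Fin n) ℕ) (i j : ℕ) :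
    entN (c • A) i j = c * entN A i j := by
  unfold entN; split_ifs with h <;> simp [Matrix.smul_apply]

lemma muZ_add {n : ℕ} (A B : Matrix (Fin n) (Fin n) ℕ) (p q : ℕ) :
    muZ (A + B) p q = muZ A p q + muZ B p q := by
  unfold muZ; simp only [entN_add]; push_cast; ring

lemma muZ_sum {n : ℕ} {α : Type*} {s : Finset α} (f : α → Matrix (Fin n) (Fin n) ℕ)
    (p q : ℕ) : muZ (∑ x ∈ s, f x) p q = ∑ x ∈ s, muZ (f x) p q := by
  unfold muZ
  simp only [entN_sum]
  push_cast
  rw [Finset.sum_sub_distrib, Finset.sum_add_distrib, Finset.sum_add_distrib]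

lemma muZ_smul {n : ℕ} (c : ℕ) (A : Matrix (Fin n) (Fin n) ℕ) (p q : ℕ) :
    muZ (c • A) p q = (c : ℤ) * muZ A p q := by
  unfold muZ; simp only [entN_smul]; push_cast; ring

lemma muZ_NESW {n a b p q : ℕ} (ha : 1 ≤ a) (hb : 1 ≤ b) (habn : a + b ≤ n)
    (hp : 1 ≤ p) (hp' : p < n) (hq : 1 ≤ q) (hq' : q < n) :
    muZ (NESW n a b) p q =
      (if p = a ∧ q = n - b then 1 else 0) + (if p = n - b ∧ q = a then 1 else 0) := by
  unfold muZ
  rw [entN_lt _ (by omega) (by omega), entN_lt _ (by omega) (by omega),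
      entN_lt _ (by omega) (by omega), entN_lt _ (by omega) (by omega)]
  simp only [NESW, Matrix.of_apply]
  split_ifs <;> push_cast <;> omega

lemma muZ_HV {n i p q : ℕ} (hp : 1 ≤ p) (hp' : p < n) (hq : 1 ≤ q) (hq' : q < n) :
    muZ (HV n i) p q = 0 := by
  unfold muZ
  rw [entN_lt _ (by omega) (by omega), entN_lt _ (by omega) (by omega),
      entN_lt _ (by omega) (by omega), entN_lt _ (by omega) (by omega)]
  simp only [HV, Matrix.of_apply]
  split_ifs <;> push_cast <;> omega

lemma F_apply {n : ℕ} (lm : (ℕ × ℕ → ℕ) × (ℕ → ℕ)) (k l : Fin n) :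
    ((∑ ab ∈ idx n, lm.1 ab • NESW n ab.1 ab.2) + ∑ i ∈ Finset.Icc 1 n, lm.2 i • HV n i) k l
    = (∑ ab ∈ idx n, lm.1 ab * NESW n ab.1 ab.2 k l) + (lm.2 (k.val+1) + lm.2 (l.val+1)) := by
  rw [Matrix.add_apply, Matrix.sum_apply, Matrix.sum_apply]
  have h1 : ∀ ab ∈ idx n, (lm.1 ab • NESW n ab.1 ab.2) k l
      = lm.1 ab * NESW n ab.1 ab.2 k l := fun ab _ => rfl
  have h2 : ∀ i ∈ Finset.Icc 1 n, (lm.2 i • HV n i) k l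
      = (if k.val + 1 = i then lm.2 i else 0) + (if l.val + 1 = i then lm.2 i else 0) := by
    intro i _
    show lm.2 i * ((if k.val + 1 = i then 1 else 0) + (if l.val + 1 = i then 1 else 0)) = _
    rw [mul_add]
    congr 1 <;> split_ifs <;> first | rw [mul_one] | rw [mul_zero]
  rw [Finset.sum_congr rfl h1, Finset.sum_congr rfl h2, Finset.sum_add_distrib,
      Finset.sum_ite_eq _ (k.val+1), Finset.sum_ite_eq _ (l.val+1),
      if_pos (by simp only [Finset.mem_Icc]; have := k.isLt; omega),
      if_pos (by simp only [Finset.mem_Icc]; have := l.isLt; omega)]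

lemma NESW_symm {n a b : ℕ} (k l : Fin n) : NESW n a b k l = NESW n a b l k := by
  simp only [NESW, Matrix.of_apply]
  split_ifs <;> tauto

lemma HV_symm {n i : ℕ} (k l : Fin n) : HV n i k l = HV n i l k := by
  simp only [HV, Matrix.of_apply]; omega

lemma NESW_diag {n a b : ℕ} (h : a + b ≤ n) (k : Fin n) : NESW n a b k k = 0 := by
  simp only [NESW, Matrix.of_apply]
  have := k.isLt
  split_ifs with h' 
  · omega
  · rfl

lemma isMonge_of_consecutive {n : ℕ} (C : Matrix (Fin n) (Fin n) ℕ)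
    (h : ∀ p q : ℕ, (hp : p + 1 < n) → (hq : q + 1 < n) →
      C ⟨p, by omega⟩ ⟨q, by omega⟩ + C ⟨p+1, hp⟩ ⟨q+1, hq⟩ ≤
      C ⟨p, by omega⟩ ⟨q+1, hq⟩ + C ⟨p+1, hp⟩ ⟨q, by omega⟩) :
    IsMongeNat C := by
  have step1 : ∀ (p : ℕ) (hp : p + 1 < n) (jv : ℕ) (hj : jv < n) (Jv : ℕ) (hJ : Jv < n),
      jv < Jv →
      C ⟨p, by omega⟩ ⟨jv, hj⟩ + C ⟨p+1, hp⟩ ⟨Jv, hJ⟩ ≤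
      C ⟨p, by omega⟩ ⟨Jv, hJ⟩ + C ⟨p+1, hp⟩ ⟨jv, hj⟩ := by
    intro p hp jv hj Jv
    induction Jv with
    | zero => omega
    | succ m ih =>
      intro hJ hlt
      rcases Nat.lt_or_ge jv m with hlt' | hge
      · have h1 := ih (by omega) hlt'
        have h2 := h p m hp hJ
        omega
      · have : jv = m := by omega
        subst this
        exact h p jv hp hJ
  have step2 : ∀ (iv : ℕ) (hi : iv < n) (Iv : ℕ) (hI : Iv < n) (jv : ℕ) (hj : jv < n)
      (Jv : ℕ) (hJ : Jv < n), iv < Iv → jv < Jv →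
      C ⟨iv, hi⟩ ⟨jv, hj⟩ + C ⟨Iv, hI⟩ ⟨Jv, hJ⟩ ≤
      C ⟨iv, hi⟩ ⟨Jv, hJ⟩ + C ⟨Iv, hI⟩ ⟨jv, hj⟩ := by
    intro iv hi Iv
    induction Iv with
    | zero => omega
    | succ m ih =>
      intro hI jv hj Jv hJ hiI hjJ
      rcases Nat.lt_or_ge iv m with hlt' | hge
      · have h1 := ih (by omega) jv hj Jv hJ hlt' hjJ
        have h2 := step1 m hI jv hj Jv hJ hjJ
        omega
      · have : iv = m := by omega
        subst this
        exact step1 iv hI jv hj Jv hJ hjJ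
  intro i I j J hiI hjJ
  exact step2 i.val i.isLt I.val I.isLt j.val j.isLt J.val J.isLt hiI hjJ

lemma entN_symm {n : ℕ} {C : Matrix (Fin n) (Fin n) ℕ} (h : C.IsSymm) (i j : ℕ) :
    entN C i j = entN C j i := by
  unfold entN
  by_cases hi : i < n <;> by_cases hj : j < n <;>
    simp only [hi, hj, and_true, and_false, true_and, false_and, dif_pos, dif_neg,
      not_false_iff, dite_true, dite_false]
  · exact (h.apply _ _).symm
  all_goals simp [hi, hj]

lemma muZ_symm {n : ℕ} {C : Matrix (Fin n) (Fin n) ℕ} (h : C.IsSymm) (p q : ℕ) :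
    muZ C p q = muZ C q p := by
  unfold muZ
  rw [entN_symm h (p-1) q, entN_symm h p (q-1), entN_symm h (p-1) (q-1), entN_symm h p q]
  ring

lemma muZ_nonneg {n : ℕ} {C : Matrix (Fin n) (Fin n) ℕ} (h : IsMongeNat C)
    {p q : ℕ} (hp : 1 ≤ p) (hp' : p < n) (hq : 1 ≤ q) (hq' : q < n) :
    0 ≤ muZ C p q := by
  unfold muZ
  rw [entN_lt _ (by omega) (by omega), entN_lt _ (by omega) (by omega),
      entN_lt _ (by omega) (by omega), entN_lt _ (by omega) (by omega)]
  have := h ⟨p-1, by omega⟩ ⟨p, hp'⟩ ⟨q-1, by omega⟩ ⟨q, hq'⟩ (by simp [Fin.lt_def]; omega)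
    (by simp [Fin.lt_def]; omega)
  omega

lemma muZ_diag_even {n : ℕ} {C : Matrix (Fin n) (Fin n) ℕ} (hs : C.IsSymm)
    (he : ∀ i, Even (C i i)) {p : ℕ} (hp : 1 ≤ p) (hp' : p < n) :
    Even (muZ C p p) := by
  unfold muZ
  rw [entN_lt _ (by omega) (by omega), entN_lt _ (by omega) (by omega),
      entN_lt _ (by omega) (by omega), entN_lt _ (by omega) (by omega)]
  have h1 : C ⟨p-1, by omega⟩ ⟨p, hp'⟩ = C ⟨p, hp'⟩ ⟨p-1, by omega⟩ := (hs.apply _ _).symm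
  obtain ⟨c1, hc1⟩ := he ⟨p-1, by omega⟩
  obtain ⟨c2, hc2⟩ := he ⟨p, hp'⟩
  rw [Int.even_iff]
  omega

lemma consecutive_of_muZ_nonneg {n : ℕ} {C : Matrix (Fin n) (Fin n) ℕ} {p q : ℕ}
    (hp : p + 1 < n) (hq : q + 1 < n) (h : 0 ≤ muZ C (p+1) (q+1)) :
    C ⟨p, Nat.lt_of_succ_lt hp⟩ ⟨q, Nat.lt_of_succ_lt hq⟩ + C ⟨p+1, hp⟩ ⟨q+1, hq⟩ ≤
    C ⟨p, Nat.lt_of_succ_lt hp⟩ ⟨q+1, hq⟩ + C ⟨p+1, hp⟩ ⟨q, Nat.lt_of_succ_lt hq⟩ := by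
  unfold muZ at h
  simp only [Nat.add_sub_cancel] at h
  rw [entN_lt C (Nat.lt_of_succ_lt hp) hq, entN_lt C hp (Nat.lt_of_succ_lt hq),
      entN_lt C (Nat.lt_of_succ_lt hp) (Nat.lt_of_succ_lt hq), entN_lt C hp hq] at h
  omega

lemma muZ_F {n : ℕ} (lm : (ℕ × ℕ → ℕ) × (ℕ → ℕ)) {p q : ℕ}
    (hp : 1 ≤ p) (hp' : p < n) (hq : 1 ≤ q) (hq' : q < n) :
    muZ ((∑ ab ∈ idx n, lm.1 ab • NESW n ab.1 ab.2) + ∑ i ∈ Finset.Icc 1 n, lm.2 i • HV n i) p q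
    = ∑ ab ∈ idx n, (lm.1 ab : ℤ) *
        ((if p = ab.1 ∧ q = n - ab.2 then 1 else 0) +
         (if p = n - ab.2 ∧ q = ab.1 then 1 else 0)) := by
  rw [muZ_add, muZ_sum, muZ_sum]
  have h2 : ∀ i ∈ Finset.Icc 1 n, muZ (lm.2 i • HV n i) p q = 0 := by
    intro i _
    rw [muZ_smul, muZ_HV hp hp' hq hq', mul_zero]
  rw [Finset.sum_congr rfl h2, Finset.sum_const_zero, add_zero]
  refine Finset.sum_congr rfl fun ab hab => ?_
  rw [mem_idx] at hab
  rw [muZ_smul, muZ_NESW hab.1 hab.2.1 hab.2.2 hp hp' hq hq']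

lemma F_symm {n : ℕ} (lm : (ℕ × ℕ → ℕ) × (ℕ → ℕ)) :
    ((∑ ab ∈ idx n, lm.1 ab • NESW n ab.1 ab.2) +
      ∑ i ∈ Finset.Icc 1 n, lm.2 i • HV n i).IsSymm := by
  rw [Matrix.IsSymm]
  ext k l
  rw [Matrix.transpose_apply, F_apply, F_apply]
  have : ∀ ab ∈ idx n, lm.1 ab * NESW n ab.1 ab.2 l k = lm.1 ab * NESW n ab.1 ab.2 k l :=
    fun ab _ => by rw [NESW_symm]
  rw [Finset.sum_congr rfl this]
  omega

lemma F_mapsTo {n : ℕ} (lm : (ℕ × ℕ → ℕ) × (ℕ → ℕ)) :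
    (((∑ ab ∈ idx n, lm.1 ab • NESW n ab.1 ab.2) +
      ∑ i ∈ Finset.Icc 1 n, lm.2 i • HV n i) : Matrix (Fin n) (Fin n) ℕ) ∈
    {C : Matrix (Fin n) (Fin n) ℕ | C.IsSymm ∧ (∀ i, Even (C i i)) ∧ IsMongeNat C} := by
  refine ⟨F_symm lm, ?_, ?_⟩
  · intro k
    rw [F_apply]
    have : ∀ ab ∈ idx n, lm.1 ab * NESW n ab.1 ab.2 k k = 0 := by
      intro ab hab
      rw [NESW_diag (mem_idx.mp hab).2.2, mul_zero]
    rw [Finset.sum_congr rfl this, Finset.sum_const_zero, zero_add]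
    exact ⟨lm.2 (k.val + 1), rfl⟩
  · apply isMonge_of_consecutive
    intro p q hp hq
    have hnn : 0 ≤ muZ ((∑ ab ∈ idx n, lm.1 ab • NESW n ab.1 ab.2) +
        ∑ i ∈ Finset.Icc 1 n, lm.2 i • HV n i) (p+1) (q+1) := by
      rw [muZ_F lm (by omega) (by omega) (by omega) (by omega)]
      refine Finset.sum_nonneg fun ab _ => mul_nonneg (Int.natCast_nonneg _) ?_
      have : ∀ c : Prop, ∀ _ : Decidable c, (0:ℤ) ≤ if c then 1 else 0 := by
        intro c hc; split_ifs <;> norm_num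
      exact add_nonneg (this _ _) (this _ _)
    exact consecutive_of_muZ_nonneg hp hq hnn
lemma telescope (f : ℕ → ℤ) (a b : ℕ) (ha : 1 ≤ a) (hab : a ≤ b + 1) :
    ∑ q ∈ Finset.Icc a b, (f q - f (q-1)) = f b - f (a-1) := by
  rw [← Finset.Ico_add_one_right_eq_Icc, Finset.sum_Ico_eq_sum_range]
  have h1 : ∀ i : ℕ, f (a + i) - f (a + i - 1)
      = (fun t => f (a - 1 + t)) (i+1) - (fun t => f (a-1+t)) i := by
    intro i; simp only
    congr 2 <;> omega
  rw [Finset.sum_congr rfl fun i _ => h1 i, Finset.sum_range_sub (fun t => f (a-1+t))]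
  congr 2 <;> omega

lemma left_inv {n : ℕ} (lm : (ℕ × ℕ → ℕ) × (ℕ → ℕ))
    (h1 : ∀ ab ∉ idx n, lm.1 ab = 0) (h2 : ∀ i ∉ Finset.Icc 1 n, lm.2 i = 0) :
    ginv n ((∑ ab ∈ idx n, lm.1 ab • NESW n ab.1 ab.2) +
      ∑ i ∈ Finset.Icc 1 n, lm.2 i • HV n i) = lm := by
  refine Prod.ext (funext fun ab => ?_) (funext fun i => ?_)
  · by_cases hab : ab ∈ idx n
    · obtain ⟨a, b⟩ := ab
      have hab' := mem_idx.mp hab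
      obtain ⟨ha, hb, habn⟩ := hab'
      have hM : muZ ((∑ ab ∈ idx n, lm.1 ab • NESW n ab.1 ab.2) +
          ∑ i ∈ Finset.Icc 1 n, lm.2 i • HV n i) a (n - b)
          = (lm.1 (a,b) : ℤ) * (if a + b = n then 2 else 1) := by
        rw [muZ_F lm ha (by omega) (by omega) (by omega)]
        have hterm : ∀ x ∈ idx n, (lm.1 x : ℤ) *
            ((if a = x.1 ∧ n - b = n - x.2 then 1 else 0) +
             (if a = n - x.2 ∧ n - b = x.1 then 1 else 0))
            = if x = (a, b) then (lm.1 x : ℤ) * (if a + b = n then 2 else 1) else 0 := by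
          intro x hx
          obtain ⟨x1, x2⟩ := x
          have hx1 : 1 ≤ x1 := (mem_idx.mp hx).1
          have hx2 : 1 ≤ x2 := (mem_idx.mp hx).2.1
          have hx3 : x1 + x2 ≤ n := (mem_idx.mp hx).2.2
          have ha' : 1 ≤ a := ha
          have hb' : 1 ≤ b := hb
          have habn' : a + b ≤ n := habn
          simp only [Prod.mk.injEq]
          split_ifs <;> (try (exfalso; omega)) <;> ring
        rw [Finset.sum_congr rfl hterm, Finset.sum_ite_eq' (idx n) (a,b), if_pos hab]
      show (if (a,b) ∈ idx n then _ else 0) = lm.1 (a,b)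
      rw [if_pos hab]
      by_cases hc : a + b = n
      · rw [if_pos hc, hM, if_pos hc]
        omega
      · rw [if_neg hc, hM, if_neg hc]
        omega
    · show (if ab ∈ idx n then _ else 0) = lm.1 ab
      rw [if_neg hab, h1 ab hab]
  · by_cases hi : i ∈ Finset.Icc 1 n
    · have hi' := Finset.mem_Icc.mp hi
      show (if i ∈ Finset.Icc 1 n then _ else 0) = lm.2 i
      rw [if_pos hi, entN_lt _ (show i - 1 < n by omega) (show i - 1 < n by omega), F_apply]
      have hz : ∀ ab ∈ idx n, lm.1 ab *
          NESW n ab.1 ab.2 ⟨i-1, by omega⟩ ⟨i-1, by omega⟩ = 0 := by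
        intro ab hab
        rw [NESW_diag (mem_idx.mp hab).2.2, mul_zero]
      rw [Finset.sum_congr rfl hz, Finset.sum_const_zero, zero_add]
      have hval : (⟨i - 1, show i - 1 < n by omega⟩ : Fin n).val + 1 = i := by
        show i - 1 + 1 = i
        omega
      rw [hval]
      omega
    · show (if i ∈ Finset.Icc 1 n then _ else 0) = lm.2 i
      rw [if_neg hi, h2 i hi]

lemma g2_val {n : ℕ} (C : Matrix (Fin n) (Fin n) ℕ) (k : Fin n) :
    (ginv n C).2 (k.val + 1) = C k k / 2 := by
  show (if k.val + 1 ∈ Finset.Icc 1 n then entN C (k.val + 1 - 1) (k.val + 1 - 1) / 2 else 0) = _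
  rw [if_pos (Finset.mem_Icc.mpr ⟨by omega, by have := k.isLt; omega⟩)]
  simp only [Nat.add_sub_cancel]
  rw [entN_lt _ k.isLt k.isLt, Fin.eta]

lemma key_lt {n : ℕ} (C : Matrix (Fin n) (Fin n) ℕ)
    (hs : C.IsSymm) (he : ∀ i, Even (C i i)) (hm : IsMongeNat C)
    (k l : Fin n) (hkl : k.val < l.val) :
    ((∑ ab ∈ idx n, (ginv n C).1 ab • NESW n ab.1 ab.2) +
      ∑ i ∈ Finset.Icc 1 n, (ginv n C).2 i • HV n i) k l = C k l := by
  rw [F_apply]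
  have hlvn : l.val < n := l.isLt
  set kv := k.val with hkv
  set lv := l.val with hlv
  set Sq := (Finset.Icc (kv+1) lv) ×ˢ (Finset.Icc (kv+1) lv) with hSq
  set T2 := Sq.filter (fun pq => pq.1 ≤ pq.2) with hT2
  -- Step B : reindex the NESW sum
  have hB : ∑ ab ∈ idx n, (ginv n C).1 ab * NESW n ab.1 ab.2 k l
      = ∑ pq ∈ T2,
        (if pq.1 = pq.2 then (muZ C pq.1 pq.2).toNat / 2 else (muZ C pq.1 pq.2).toNat) := by
    have hterm : ∀ ab ∈ idx n, (ginv n C).1 ab * NESW n ab.1 ab.2 k l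
        = if kv + 1 ≤ ab.1 ∧ n - ab.2 ≤ lv then (ginv n C).1 ab else 0 := by
      intro ab hab
      obtain ⟨a, b⟩ := ab
      have h1 : 1 ≤ a := (mem_idx.mp hab).1
      have h2 : 1 ≤ b := (mem_idx.mp hab).2.1
      have h3 : a + b ≤ n := (mem_idx.mp hab).2.2
      show _ * (if (kv + 1 ≤ a ∧ n - b < lv + 1) ∨ (n - b < kv + 1 ∧ lv + 1 ≤ a)
          then 1 else 0) = _
      split_ifs <;> first | exact mul_one _ | exact mul_zero _ | (exfalso; omega)
    rw [Finset.sum_congr rfl hterm, ← Finset.sum_filter]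
    refine Finset.sum_nbij' (fun ab => (ab.1, n - ab.2)) (fun pq => (pq.1, n - pq.2))
      ?_ ?_ ?_ ?_ ?_
    · intro ab hab
      simp only [Finset.mem_filter, Finset.mem_product, Finset.mem_Icc, mem_idx,
        hT2, hSq] at *
      omega
    · intro pq hpq
      simp only [Finset.mem_filter, Finset.mem_product, Finset.mem_Icc, mem_idx,
        hT2, hSq] at *
      omega
    · intro ab hab
      simp only [Finset.mem_filter, mem_idx] at hab
      have : n - (n - ab.2) = ab.2 := by omega
      rw [Prod.ext_iff]
      exact ⟨rfl, this⟩
    · intro pq hpq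
      simp only [hT2, hSq, Finset.mem_filter, Finset.mem_product, Finset.mem_Icc] at hpq
      have : n - (n - pq.2) = pq.2 := by omega
      rw [Prod.ext_iff]
      exact ⟨rfl, this⟩
    · intro ab hab
      simp only [Finset.mem_filter, mem_idx] at hab
      show (if ab ∈ idx n then _ else 0) = _
      rw [if_pos (mem_idx.mpr hab.1)]
      have hcond : (ab.1 + ab.2 = n) = (ab.1 = n - ab.2) := by
        apply propext; constructor <;> intro <;> omega
      simp only [hcond]
  -- Step C : double the sum, express via muZ over the full square
  have hbound : ∀ pq : ℕ × ℕ, pq ∈ T2 ∨ pq ∈ Sq →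
      1 ≤ pq.1 ∧ pq.1 < n ∧ 1 ≤ pq.2 ∧ pq.2 < n := by
    intro pq hpq
    rcases hpq with hpq | hpq
    · rw [hT2, Finset.mem_filter] at hpq
      have := hpq.1
      rw [hSq, Finset.mem_product, Finset.mem_Icc, Finset.mem_Icc] at this
      omega
    · rw [hSq, Finset.mem_product, Finset.mem_Icc, Finset.mem_Icc] at hpq
      omega
  have hC : 2 * ((∑ pq ∈ T2,
        (if pq.1 = pq.2 then (muZ C pq.1 pq.2).toNat / 2 else (muZ C pq.1 pq.2).toNat) : ℕ) : ℤ)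
      = ∑ pq ∈ Sq, muZ C pq.1 pq.2 := by
    rw [Nat.cast_sum, Finset.mul_sum]
    have hC1 : ∀ pq ∈ T2, 2 * ((if pq.1 = pq.2 then (muZ C pq.1 pq.2).toNat / 2
          else (muZ C pq.1 pq.2).toNat : ℕ) : ℤ)
        = muZ C pq.1 pq.2 + (if pq.1 < pq.2 then muZ C pq.1 pq.2 else 0) := by
      intro pq hpq
      obtain ⟨b1, b2, b3, b4⟩ := hbound pq (Or.inl hpq)
      have hle : pq.1 ≤ pq.2 := by
        rw [hT2, Finset.mem_filter] at hpq; exact hpq.2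
      have hnn := muZ_nonneg hm b1 b2 b3 b4
      by_cases hd : pq.1 = pq.2
      · rw [if_pos hd, if_neg (by omega)]
        have hev := muZ_diag_even hs he b1 b2
        rw [← hd] at hnn ⊢
        obtain ⟨c, hc⟩ := hev
        omega
      · rw [if_neg hd, if_pos (by omega)]
        omega
    rw [Finset.sum_congr rfl hC1, Finset.sum_add_distrib, ← Finset.sum_filter]
    have hfilt : T2.filter (fun pq => pq.1 < pq.2)
        = Sq.filter (fun pq => pq.1 < pq.2) := by
      rw [hT2, Finset.filter_filter]
      apply Finset.filter_congr
      intro pq _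
      constructor
      · intro h; exact h.2
      · intro h; exact ⟨le_of_lt h, h⟩
    rw [hfilt]
    have hswap : ∑ pq ∈ Sq.filter (fun pq => pq.1 < pq.2), muZ C pq.1 pq.2
        = ∑ pq ∈ Sq.filter (fun pq => ¬ pq.1 ≤ pq.2), muZ C pq.1 pq.2 := by
      refine Finset.sum_nbij' (fun pq => (pq.2, pq.1)) (fun pq => (pq.2, pq.1))
        ?_ ?_ ?_ ?_ ?_
      · intro pq hpq
        simp only [hSq, Finset.mem_filter, Finset.mem_product, Finset.mem_Icc] at *
        omega
      · intro pq hpq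
        simp only [hSq, Finset.mem_filter, Finset.mem_product, Finset.mem_Icc] at *
        omega
      · intro pq _; rfl
      · intro pq _; rfl
      · intro pq _
        exact muZ_symm hs pq.1 pq.2
    rw [hswap, hT2, Finset.sum_filter_add_sum_filter_not]
  -- Step D : telescoping
  have hD : ∑ pq ∈ Sq, muZ C pq.1 pq.2
      = 2 * (C k l : ℤ) - (C k k : ℤ) - (C l l : ℤ) := by
    rw [hSq, Finset.sum_product]
    have hinner : ∀ p : ℕ, ∑ q ∈ Finset.Icc (kv+1) lv, muZ C p q
        = ((entN C p kv : ℤ) - (entN C p lv : ℤ)) -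
          ((entN C (p-1) kv : ℤ) - (entN C (p-1) lv : ℤ)) := by
      intro p
      have ht := telescope (fun q => (entN C (p-1) q : ℤ) - (entN C p q : ℤ))
        (kv+1) lv (by omega) (by omega)
      simp only [Nat.add_sub_cancel] at ht
      have hcg : ∀ q ∈ Finset.Icc (kv+1) lv, muZ C p q
          = ((entN C (p-1) q : ℤ) - (entN C p q : ℤ)) -
            ((entN C (p-1) (q-1) : ℤ) - (entN C p (q-1) : ℤ)) := by
        intro q _
        unfold muZ
        ring
      rw [Finset.sum_congr rfl hcg, ht]
      ring
    refine Eq.trans (Finset.sum_congr rfl fun p _ => hinner p) ?_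
    have ht2 := telescope (fun p => (entN C p kv : ℤ) - (entN C p lv : ℤ))
      (kv+1) lv (by omega) (by omega)
    simp only [Nat.add_sub_cancel] at ht2
    rw [ht2]
    rw [entN_lt C hlvn (by omega), entN_lt C hlvn hlvn,
        entN_lt C (by omega : kv < n) (by omega : kv < n), entN_lt C (by omega : kv < n) hlvn]
    simp only [hkv, hlv, Fin.eta]
    rw [hs.apply k l]
    ring
  -- combine
  obtain ⟨ck, hck⟩ := he k
  obtain ⟨cl, hcl⟩ := he l
  rw [g2_val C k, g2_val C l, hB]
  omega

lemma right_inv {n : ℕ} (C : Matrix (Fin n) (Fin n) ℕ)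
    (hs : C.IsSymm) (he : ∀ i, Even (C i i)) (hm : IsMongeNat C) :
    ((∑ ab ∈ idx n, (ginv n C).1 ab • NESW n ab.1 ab.2) +
      ∑ i ∈ Finset.Icc 1 n, (ginv n C).2 i • HV n i) = C := by
  ext k l
  rcases lt_trichotomy k.val l.val with h | h | h
  · exact key_lt C hs he hm k l h
  · have hkl : k = l := Fin.ext h
    subst hkl
    rw [F_apply]
    have hz : ∀ ab ∈ idx n, (ginv n C).1 ab * NESW n ab.1 ab.2 k k = 0 := fun ab hab => by
      rw [NESW_diag (mem_idx.mp hab).2.2, mul_zero]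
    rw [Finset.sum_congr rfl hz, Finset.sum_const_zero, zero_add, g2_val C k]
    obtain ⟨c, hc⟩ := he k
    omega
  · have hsymF := F_symm (n := n) (ginv n C)
    rw [hsymF.apply l k]
    show ((∑ ab ∈ idx n, (ginv n C).1 ab • NESW n ab.1 ab.2) +
      ∑ i ∈ Finset.Icc 1 n, (ginv n C).2 i • HV n i) l k = C k l
    rw [key_lt C hs he hm l k h, hs.apply k l]


/-- The map `((λ_{a,b}), (λ_i)) ↦ Σ λ_{a,b} • NESW (a × b) + Σ λ_i • HV i` is a bijection
from pairs of families of nonnegative integers (indexed by `idx n` and `{1, …, n}`) onto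
the set of symmetric Monge matrices with entries in `ℕ` and even diagonal entries. -/
theorem symmetric_monge_nat_bijection (n : ℕ) (hn : 2 ≤ n) :
    Set.BijOn
      (fun lm : (ℕ × ℕ → ℕ) × (ℕ → ℕ) =>
        (∑ ab ∈ idx n, lm.1 ab • NESW n ab.1 ab.2) +
          ∑ i ∈ Finset.Icc 1 n, lm.2 i • HV n i)
      {lm | (∀ ab ∉ idx n, lm.1 ab = 0) ∧ (∀ i ∉ Finset.Icc 1 n, lm.2 i = 0)}
      {C : Matrix (Fin n) (Fin n) ℕ | C.IsSymm ∧ (∀ i, Even (C i i)) ∧ IsMongeNat C} := by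
  apply Set.InvOn.bijOn (f' := ginv n)
  · constructor
    · intro lm hlm
      exact left_inv lm hlm.1 hlm.2
    · intro C hC
      exact right_inv C hC.1 hC.2.1 hC.2.2
  · intro lm _
    exact F_mapsTo lm
  · intro C _
    exact ⟨fun ab hab => if_neg hab, fun i hi => if_neg hi⟩
end

section
/- For all integers p, q ≥ 2, the Monge polytope M_{p×q} equals the convex hull of the set V consisting of: (1/(ab)) · NE(a×b) for 1 ≤ a < p, 1 ≤ b < q; (1/(ab)) · SW(a×b) for 1 ≤ a < p, 1 ≤ b < q; (1/q) · HOR(i) for 1 ≤ i ≤ p; and (1/p) · VER(j) for 1 ≤ j ≤ q. -/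
open Finset

/-- The Monge property for a `p × q` real matrix (indices are 0-based). -/
def IsMonge {p q : ℕ} (C : Matrix (Fin p) (Fin q) ℝ) : Prop :=
  ∀ i I : Fin p, ∀ j J : Fin q, i < I → j < J → C i j + C I J ≤ C i J + C I j

/-- The Monge polytope: `p × q` matrices with nonnegative entries summing to 1 that
have the Monge property. -/
def Mpq (p q : ℕ) : Set (Matrix (Fin p) (Fin q) ℝ) :=
  {C | (∀ i j, 0 ≤ C i j) ∧ (∑ i, ∑ j, C i j) = 1 ∧ IsMonge C}

/-- `NE p q a b`: the `p × q` 0/1 matrix with (1-based) `(k, l)` entry 1 iff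
`k ≤ a ∧ l > q - b`. -/
def NE (p q a b : ℕ) : Matrix (Fin p) (Fin q) ℝ :=
  Matrix.of fun k l => if k.val + 1 ≤ a ∧ q - b < l.val + 1 then 1 else 0

/-- `SW p q a b`: the `p × q` 0/1 matrix with (1-based) `(k, l)` entry 1 iff
`k > p - a ∧ l ≤ b`. -/
def SW (p q a b : ℕ) : Matrix (Fin p) (Fin q) ℝ :=
  Matrix.of fun k l => if p - a < k.val + 1 ∧ l.val + 1 ≤ b then 1 else 0

/-- `HOR p q i`: the `p × q` 0/1 matrix with (1-based) `(k, l)` entry 1 iff `k = i`. -/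
def HOR (p q i : ℕ) : Matrix (Fin p) (Fin q) ℝ :=
  Matrix.of fun k _ => if k.val + 1 = i then 1 else 0

/-- `VER p q j`: the `p × q` 0/1 matrix with (1-based) `(k, l)` entry 1 iff `l = j`. -/
def VER (p q j : ℕ) : Matrix (Fin p) (Fin q) ℝ :=
  Matrix.of fun _ l => if l.val + 1 = j then 1 else 0

/-- The candidate vertex set of the Monge polytope `M_{p×q}`. -/
def Vpq (p q : ℕ) : Set (Matrix (Fin p) (Fin q) ℝ) :=
  {M | ∃ a ∈ Finset.Ico 1 p, ∃ b ∈ Finset.Ico 1 q,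
      M = (1 / ((a : ℝ) * (b : ℝ))) • NE p q a b} ∪
  {M | ∃ a ∈ Finset.Ico 1 p, ∃ b ∈ Finset.Ico 1 q,
      M = (1 / ((a : ℝ) * (b : ℝ))) • SW p q a b} ∪
  {M | ∃ i ∈ Finset.Icc 1 p, M = (1 / (q : ℝ)) • HOR p q i} ∪
  {M | ∃ j ∈ Finset.Icc 1 q, M = (1 / (p : ℝ)) • VER p q j}

/-!
Every vertex is a nonnegative Monge matrix with entry sum 1 and the polytope is convex, which
gives `⊇`. For `⊆` it suffices to write a nonnegative Monge matrix `R` as a nonnegative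
combination of vertices: comparing entry sums then makes it a convex combination.

The Monge property amounts to the nonnegativity of the adjacent second differences `d(a, b)`.
The block `NE` of rows `≤ i` and columns `> j` and the block `SW` of rows `> i` and columns `≤ j`
each have a single nonzero adjacent second difference, equal to `1`, at `(i, j)`. Subtracting
`u • NE + v • SW` with `u + v = d(i, j)` therefore kills `d(i, j)` and no other one; taking `u` as
large as the entries of `R` on `NE` allow, the Monge inequalities show that `SW` can take the
rest. By induction on the number of nonzero `d(a, b)` we are left with a nonnegative matrix with
all `d(a, b) = 0`, that is, of the form `r k + c l`, a nonnegative combination of `HOR` and `VER`.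
-/

section ConeHull

variable {𝕜 E : Type*} [Field 𝕜] [LinearOrder 𝕜] [IsStrictOrderedRing 𝕜] [AddCommGroup E]
  [Module 𝕜 E]

theorem mem_convexHull_of_mem_pointedConeHull {s : Set E} (f : E →ₗ[𝕜] 𝕜)
    (hs : ∀ y ∈ s, f y = 1) {x : E} (hx : x ∈ PointedCone.hull 𝕜 s) (hfx : f x = 1) :
    x ∈ convexHull 𝕜 s := by
  obtain ⟨c, hcs, hc0, rfl⟩ := PointedCone.mem_hull_set.1 hx
  have hc1 : ∑ y ∈ c.support, c y = 1 := by
    rw [← hfx, Finsupp.sum, map_sum]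
    exact sum_congr rfl fun y hy => by rw [map_smul, hs y (hcs hy), smul_eq_mul, mul_one]
  exact (convex_convexHull 𝕜 s).sum_mem (fun y _ => hc0 y) hc1
    fun y hy => subset_convexHull 𝕜 s (hcs hy)

end ConeHull

theorem card_filter_fin_val (n : ℕ) (P : ℕ → Prop) [DecidablePred P] :
    #{k : Fin n | P k} = #{k ∈ range n | P k} := by
  rw [← image_fin_univ, filter_image, card_image_of_injective _ Fin.val_injective]

def secondDiff (f : ℕ → ℕ → ℝ) (a b : ℕ) : ℝ :=
  f a (b + 1) + f (a + 1) b - f a b - f (a + 1) (b + 1)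

theorem secondDiff_sub (f g : ℕ → ℕ → ℝ) (a b : ℕ) :
    secondDiff (f - g) a b = secondDiff f a b - secondDiff g a b := by
  simp only [secondDiff, Pi.sub_apply]
  ring

theorem secondDiff_smul (c : ℝ) (f : ℕ → ℕ → ℝ) (a b : ℕ) :
    secondDiff (c • f) a b = c * secondDiff f a b := by
  simp only [secondDiff, Pi.smul_apply, smul_eq_mul]
  ring

theorem sum_Ico_sum_Ico_secondDiff (f : ℕ → ℕ → ℝ) {i I j J : ℕ} (hiI : i ≤ I) (hjJ : j ≤ J) :
    ∑ a ∈ Ico i I, ∑ b ∈ Ico j J, secondDiff f a b = f i J + f I j - f i j - f I J := by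
  have inner (a : ℕ) : ∑ b ∈ Ico j J, secondDiff f a b =
      (f a J - f a j) - (f (a + 1) J - f (a + 1) j) := calc
    _ = ∑ b ∈ Ico j J, ((f a (b + 1) - f (a + 1) (b + 1)) - (f a b - f (a + 1) b)) :=
      sum_congr rfl fun b _ => by simp only [secondDiff]; ring
    _ = _ := by rw [sum_Ico_sub (fun b => f a b - f (a + 1) b) hjJ]; ring
  calc ∑ a ∈ Ico i I, ∑ b ∈ Ico j J, secondDiff f a b
      = -∑ a ∈ Ico i I, ((f (a + 1) J - f (a + 1) j) - (f a J - f a j)) := by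
        rw [← sum_neg_distrib]; exact sum_congr rfl fun a _ => by rw [inner]; ring
    _ = _ := by rw [sum_Ico_sub (fun a => f a J - f a j) hiI]; ring

section MongeMatrices

variable {p q : ℕ}

def entrySum (p q : ℕ) : Matrix (Fin p) (Fin q) ℝ →ₗ[ℝ] ℝ where
  toFun C := ∑ i, ∑ j, C i j
  map_add' C D := by simp only [Matrix.add_apply, sum_add_distrib]
  map_smul' c C := by simp only [Matrix.smul_apply, smul_eq_mul, mul_sum, RingHom.id_apply]

theorem IsMonge.add {C D : Matrix (Fin p) (Fin q) ℝ} (hC : IsMonge C) (hD : IsMonge D) :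
    IsMonge (C + D) := fun i I j J hi hj => by
  simp only [Matrix.add_apply]
  linarith [hC i I j J hi hj, hD i I j J hi hj]

theorem IsMonge.smul {C : Matrix (Fin p) (Fin q) ℝ} (hC : IsMonge C) {c : ℝ} (hc : 0 ≤ c) :
    IsMonge (c • C) := fun i I j J hi hj => by
  simp only [Matrix.smul_apply, smul_eq_mul, ← mul_add]
  exact mul_le_mul_of_nonneg_left (hC i I j J hi hj) hc

theorem convex_Mpq : Convex ℝ (Mpq p q) := by
  rintro C ⟨hC0, hC1, hCM⟩ D ⟨hD0, hD1, hDM⟩ a b ha hb hab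
  refine ⟨fun i j => ?_, ?_, (hCM.smul ha).add (hDM.smul hb)⟩
  · simp only [Matrix.add_apply, Matrix.smul_apply, smul_eq_mul]
    have := hC0 i j; have := hD0 i j; positivity
  · change entrySum p q _ = 1
    rw [map_add, map_smul, map_smul, show entrySum p q C = 1 from hC1,
      show entrySum p q D = 1 from hD1]
    simpa using hab

theorem smul_mem_Mpq {C : Matrix (Fin p) (Fin q) ℝ} (hC0 : ∀ i j, 0 ≤ C i j) (hCM : IsMonge C)
    {s : ℝ} (hs : 0 < s) (hCs : ∑ i, ∑ j, C i j = s) : (1 / s) • C ∈ Mpq p q := by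
  refine ⟨fun i j => ?_, ?_, hCM.smul (by positivity)⟩
  · simp only [Matrix.smul_apply, smul_eq_mul]
    have := hC0 i j; positivity
  · simp only [Matrix.smul_apply, smul_eq_mul, ← mul_sum, hCs]
    field_simp

theorem sum_sum_ite_and (P : Fin p → Prop) (Q : Fin q → Prop) [DecidablePred P]
    [DecidablePred Q] :
    ∑ k, ∑ l, (if P k ∧ Q l then (1 : ℝ) else 0) = #{k | P k} * #{l | Q l} := by
  simp [ite_and, sum_boole, ← sum_filter]

theorem sum_NE {a b : ℕ} (ha : a ≤ p) (hb : b ≤ q) :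
    ∑ k, ∑ l, NE p q a b k l = a * b := by
  simp only [NE, Matrix.of_apply]
  rw [sum_sum_ite_and, card_filter_fin_val p (· + 1 ≤ a), card_filter_fin_val q (q - b < · + 1)]
  have hrows : {k ∈ range p | k + 1 ≤ a} = range a := by
    ext; simp only [mem_filter, mem_range]; omega
  have hcols : {l ∈ range q | q - b < l + 1} = Ico (q - b) q := by
    ext; simp only [mem_filter, mem_range, mem_Ico]; omega
  rw [hrows, hcols]
  simp [hb]

theorem sum_SW {a b : ℕ} (ha : a ≤ p) (hb : b ≤ q) :
    ∑ k, ∑ l, SW p q a b k l = a * b := by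
  simp only [SW, Matrix.of_apply]
  rw [sum_sum_ite_and, card_filter_fin_val p (p - a < · + 1), card_filter_fin_val q (· + 1 ≤ b)]
  have hrows : {k ∈ range p | p - a < k + 1} = Ico (p - a) p := by
    ext; simp only [mem_filter, mem_range, mem_Ico]; omega
  have hcols : {l ∈ range q | l + 1 ≤ b} = range b := by
    ext; simp only [mem_filter, mem_range]; omega
  rw [hrows, hcols]
  simp [ha]

theorem sum_HOR {i : ℕ} (hi : 1 ≤ i) (hip : i ≤ p) : ∑ k, ∑ l, HOR p q i k l = q := by
  simp only [HOR, Matrix.of_apply, sum_const, card_univ, Fintype.card_fin, nsmul_eq_mul,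
    ← mul_sum, sum_boole]
  rw [card_filter_fin_val p (· + 1 = i), show {k ∈ range p | k + 1 = i} = {i - 1} by
    ext; simp only [mem_filter, mem_range, mem_singleton]; omega]
  simp

theorem sum_VER {j : ℕ} (hj : 1 ≤ j) (hjq : j ≤ q) : ∑ k, ∑ l, VER p q j k l = p := by
  simp only [VER, Matrix.of_apply, sum_boole]
  rw [card_filter_fin_val q (· + 1 = j), show {l ∈ range q | l + 1 = j} = {j - 1} by
    ext; simp only [mem_filter, mem_range, mem_singleton]; omega]
  simp

theorem isMonge_NE (a b : ℕ) : IsMonge (NE p q a b) := fun i I j J hi hj => by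
  simp only [NE, Matrix.of_apply]
  rw [Fin.lt_def] at hi hj
  split_ifs <;> norm_num <;> omega

theorem isMonge_SW (a b : ℕ) : IsMonge (SW p q a b) := fun i I j J hi hj => by
  simp only [SW, Matrix.of_apply]
  rw [Fin.lt_def] at hi hj
  split_ifs <;> norm_num <;> omega

theorem isMonge_of_forall_eq_add {C : Matrix (Fin p) (Fin q) ℝ} (r : Fin p → ℝ) (c : Fin q → ℝ)
    (hC : ∀ k l, C k l = r k + c l) : IsMonge C := fun i I j J _ _ => by
  simp only [hC]
  linarith

theorem isMonge_HOR (i : ℕ) : IsMonge (HOR p q i) :=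
  isMonge_of_forall_eq_add (fun k => if k.val + 1 = i then 1 else 0) 0 fun _ _ => by simp [HOR]

theorem isMonge_VER (j : ℕ) : IsMonge (VER p q j) :=
  isMonge_of_forall_eq_add 0 (fun l => if l.val + 1 = j then 1 else 0) fun _ _ => by simp [VER]

theorem Vpq_subset_Mpq (hp : 0 < p) (hq : 0 < q) : Vpq p q ⊆ Mpq p q := by
  have nonneg (P : Prop) [Decidable P] : (0 : ℝ) ≤ if P then 1 else 0 := by split_ifs <;> norm_num
  rintro M (((⟨a, ha, b, hb, rfl⟩ | ⟨a, ha, b, hb, rfl⟩) | ⟨i, hi, rfl⟩) | ⟨j, hj, rfl⟩) <;>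
    simp only [mem_Ico, mem_Icc] at *
  · exact smul_mem_Mpq (fun _ _ => nonneg _) (isMonge_NE a b)
      (mul_pos (Nat.cast_pos.2 ha.1) (Nat.cast_pos.2 hb.1))
      (sum_NE ha.2.le hb.2.le)
  · exact smul_mem_Mpq (fun _ _ => nonneg _) (isMonge_SW a b)
      (mul_pos (Nat.cast_pos.2 ha.1) (Nat.cast_pos.2 hb.1))
      (sum_SW ha.2.le hb.2.le)
  · exact smul_mem_Mpq (fun _ _ => nonneg _) (isMonge_HOR i) (by positivity) (sum_HOR hi.1 hi.2)
  · exact smul_mem_Mpq (fun _ _ => nonneg _) (isMonge_VER j) (by positivity) (sum_VER hj.1 hj.2)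

-- Entries outside the matrix read as `0`, so shifted indices `a + 1`, `b + 1` need no bounds.
def natEntry : Matrix (Fin p) (Fin q) ℝ →ₗ[ℝ] ℕ → ℕ → ℝ where
  toFun C k l := if h : k < p ∧ l < q then C ⟨k, h.1⟩ ⟨l, h.2⟩ else 0
  map_add' C D := by ext k l; by_cases h : k < p ∧ l < q <;> simp [h]
  map_smul' c C := by ext k l; by_cases h : k < p ∧ l < q <;> simp [h]

theorem natEntry_of_lt (C : Matrix (Fin p) (Fin q) ℝ) {k l : ℕ} (hk : k < p) (hl : l < q) :
    natEntry C k l = C ⟨k, hk⟩ ⟨l, hl⟩ :=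
  dif_pos ⟨hk, hl⟩

@[simp]
theorem natEntry_val (C : Matrix (Fin p) (Fin q) ℝ) (k : Fin p) (l : Fin q) :
    natEntry C k l = C k l :=
  natEntry_of_lt C k.isLt l.isLt

theorem natEntry_add_le_of_secondDiff_nonneg {C : Matrix (Fin p) (Fin q) ℝ}
    (hC : ∀ a b, a + 1 < p → b + 1 < q → 0 ≤ secondDiff (natEntry C) a b) {i I j J : ℕ}
    (hiI : i ≤ I) (hjJ : j ≤ J) (hI : I < p) (hJ : J < q) :
    natEntry C i j + natEntry C I J ≤ natEntry C i J + natEntry C I j := by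
  have := sum_Ico_sum_Ico_secondDiff (natEntry C) hiI hjJ
  have : 0 ≤ ∑ a ∈ Ico i I, ∑ b ∈ Ico j J, secondDiff (natEntry C) a b :=
    sum_nonneg fun a ha => sum_nonneg fun b hb => by
      rw [mem_Ico] at ha hb
      exact hC a b (by omega) (by omega)
  linarith

theorem isMonge_iff_secondDiff_nonneg {C : Matrix (Fin p) (Fin q) ℝ} :
    IsMonge C ↔ ∀ a b, a + 1 < p → b + 1 < q → 0 ≤ secondDiff (natEntry C) a b := by
  refine ⟨fun hC a b ha hb => ?_, fun hC i I j J hiI hjJ => ?_⟩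
  · have := hC ⟨a, by omega⟩ ⟨a + 1, ha⟩ ⟨b, by omega⟩ ⟨b + 1, hb⟩ (by simp) (by simp)
    simp only [secondDiff, natEntry_of_lt C (by omega : a < p) (by omega : b < q),
      natEntry_of_lt C ha hb, natEntry_of_lt C (by omega : a < p) hb,
      natEntry_of_lt C ha (by omega : b < q)]
    linarith
  · simpa using natEntry_add_le_of_secondDiff_nonneg hC hiI.le hjJ.le I.isLt J.isLt

theorem IsMonge.natEntry_add_le {C : Matrix (Fin p) (Fin q) ℝ} (hC : IsMonge C) {i I j J : ℕ}
    (hiI : i ≤ I) (hjJ : j ≤ J) (hI : I < p) (hJ : J < q) :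
    natEntry C i j + natEntry C I J ≤ natEntry C i J + natEntry C I j :=
  natEntry_add_le_of_secondDiff_nonneg (isMonge_iff_secondDiff_nonneg.1 hC) hiI hjJ hI hJ

theorem NE_corner_apply {i j : ℕ} (hj : j < q) (k : Fin p) (l : Fin q) :
    NE p q (i + 1) (q - 1 - j) k l = if (k : ℕ) ≤ i ∧ j < l then 1 else 0 := by
  simp only [NE, Matrix.of_apply]
  exact if_congr (by omega) rfl rfl

theorem SW_corner_apply {i j : ℕ} (hi : i < p) (k : Fin p) (l : Fin q) :
    SW p q (p - 1 - i) (j + 1) k l = if i < k ∧ (l : ℕ) ≤ j then 1 else 0 := by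
  simp only [SW, Matrix.of_apply]
  exact if_congr (by omega) rfl rfl

theorem secondDiff_natEntry_NE_corner {i j a b : ℕ} (hj : j < q) (ha : a + 1 < p)
    (hb : b + 1 < q) :
    secondDiff (natEntry (NE p q (i + 1) (q - 1 - j))) a b = if a = i ∧ b = j then 1 else 0 := by
  simp only [secondDiff, natEntry_of_lt _ (by omega : a < p) (by omega : b < q),
    natEntry_of_lt _ ha hb, natEntry_of_lt _ (by omega : a < p) hb,
    natEntry_of_lt _ ha (by omega : b < q), NE_corner_apply hj]
  split_ifs <;> first | omega | norm_num

theorem secondDiff_natEntry_SW_corner {i j a b : ℕ} (hi : i < p) (ha : a + 1 < p)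
    (hb : b + 1 < q) :
    secondDiff (natEntry (SW p q (p - 1 - i) (j + 1))) a b = if a = i ∧ b = j then 1 else 0 := by
  simp only [secondDiff, natEntry_of_lt _ (by omega : a < p) (by omega : b < q),
    natEntry_of_lt _ ha hb, natEntry_of_lt _ (by omega : a < p) hb,
    natEntry_of_lt _ ha (by omega : b < q), SW_corner_apply hi]
  split_ifs <;> first | omega | norm_num

theorem secondDiff_sub_corner (R : Matrix (Fin p) (Fin q) ℝ) (u v : ℝ) {i j a b : ℕ}
    (hi : i < p) (hj : j < q) (ha : a + 1 < p) (hb : b + 1 < q) :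
    secondDiff (natEntry (R - u • NE p q (i + 1) (q - 1 - j) - v • SW p q (p - 1 - i) (j + 1))) a b
      = secondDiff (natEntry R) a b - if a = i ∧ b = j then u + v else 0 := by
  rw [map_sub, map_sub, map_smul, map_smul, secondDiff_sub, secondDiff_sub, secondDiff_smul,
    secondDiff_smul, secondDiff_natEntry_NE_corner hj ha hb, secondDiff_natEntry_SW_corner hi ha hb]
  split_ifs <;> ring

theorem IsMonge.secondDiff_le_add {C : Matrix (Fin p) (Fin q) ℝ} (hC : IsMonge C)
    (hC0 : ∀ k l, 0 ≤ C k l) {i j : ℕ} {k k' : Fin p} {l l' : Fin q} (hk : (k : ℕ) ≤ i)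
    (hk' : i < k') (hl : j < l) (hl' : (l' : ℕ) ≤ j) :
    secondDiff (natEntry C) i j ≤ C k l + C k' l' := by
  -- Monge inequalities on `[k, i] × [j, j+1]`, `[i+1, k'] × [j, j+1]`, `[k, k'] × [l', j]` and
  -- `[k, k'] × [j+1, l]` add up to this, up to the terms `C k' l, C k l' ≥ 0`.
  have := hC.natEntry_add_le hk (j.le_add_right 1) (by omega) (by omega)
  have := hC.natEntry_add_le hk' (j.le_add_right 1) k'.isLt (by omega)
  have := hC.natEntry_add_le (hk.trans hk'.le) hl' k'.isLt (by omega)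
  have := hC.natEntry_add_le (hk.trans hk'.le) hl k'.isLt l.isLt
  have := hC0 k' l
  have := hC0 k l'
  simp only [natEntry_val] at *
  unfold secondDiff
  linarith

theorem exists_corner_weights {R : Matrix (Fin p) (Fin q) ℝ} (hR0 : ∀ k l, 0 ≤ R k l)
    (hR : IsMonge R) {i j : ℕ} (hi : i + 1 < p) (hj : j + 1 < q) :
    ∃ u v : ℝ, 0 ≤ u ∧ 0 ≤ v ∧ u + v = secondDiff (natEntry R) i j ∧
      ∀ k l, 0 ≤ (R - u • NE p q (i + 1) (q - 1 - j) - v • SW p q (p - 1 - i) (j + 1)) k l := by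
  -- `u` is as large as the north-east block allows; the south-west block can then absorb the
  -- remainder `v` by `IsMonge.secondDiff_le_add`.
  set d := secondDiff (natEntry R) i j
  have hd : 0 ≤ d := isMonge_iff_secondDiff_nonneg.1 hR i j hi hj
  obtain ⟨⟨k₀, l₀⟩, hmem, hmin⟩ :=
    exists_min_image {kl : Fin p × Fin q | (kl.1 : ℕ) ≤ i ∧ j < kl.2} (fun kl => R kl.1 kl.2)
      ⟨(⟨i, by omega⟩, ⟨j + 1, hj⟩), by simp⟩
  simp only [mem_filter, mem_univ, true_and] at hmem
  refine ⟨min d (R k₀ l₀), d - min d (R k₀ l₀), le_min hd (hR0 k₀ l₀),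
    sub_nonneg.2 (min_le_left _ _), add_sub_cancel _ _, fun k l => ?_⟩
  simp only [Matrix.sub_apply, Matrix.smul_apply, smul_eq_mul, NE_corner_apply (by omega : j < q),
    SW_corner_apply (by omega : i < p)]
  split_ifs with hNE hSW hSW
  · omega
  · have := hmin (k, l) (by simp [hNE])
    linarith [min_le_right d (R k₀ l₀)]
  · have := hR.secondDiff_le_add hR0 hmem.1 hSW.1 hmem.2 hSW.2
    rcases min_cases d (R k₀ l₀) with ⟨h, -⟩ | ⟨h, -⟩ <;> linarith [hR0 k l]
  · simpa using hR0 k l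

noncomputable def mongeCorners (R : Matrix (Fin p) (Fin q) ℝ) : Finset (ℕ × ℕ) :=
  {ab ∈ range (p - 1) ×ˢ range (q - 1) | secondDiff (natEntry R) ab.1 ab.2 ≠ 0}

theorem exists_peel_corner {R : Matrix (Fin p) (Fin q) ℝ} (hR0 : ∀ k l, 0 ≤ R k l)
    (hR : IsMonge R) {i j : ℕ} (hij : (i, j) ∈ mongeCorners R) :
    ∃ R' : Matrix (Fin p) (Fin q) ℝ, (∀ k l, 0 ≤ R' k l) ∧ IsMonge R' ∧
      mongeCorners R' = (mongeCorners R).erase (i, j) ∧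
      ∃ u v : ℝ, 0 ≤ u ∧ 0 ≤ v ∧
        R = R' + u • NE p q (i + 1) (q - 1 - j) + v • SW p q (p - 1 - i) (j + 1) := by
  simp only [mongeCorners, mem_filter, mem_product, mem_range] at hij
  obtain ⟨⟨hi, hj⟩, -⟩ := hij
  obtain ⟨u, v, hu, hv, huv, hR'0⟩ := exists_corner_weights hR0 hR (i := i) (j := j) (by omega)
    (by omega)
  set R' := R - u • NE p q (i + 1) (q - 1 - j) - v • SW p q (p - 1 - i) (j + 1)
  have hdiff (a b : ℕ) (ha : a + 1 < p) (hb : b + 1 < q) :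
      secondDiff (natEntry R') a b = if a = i ∧ b = j then 0 else secondDiff (natEntry R) a b := by
    rw [secondDiff_sub_corner R u v (by omega) (by omega) ha hb, huv]
    split_ifs with h
    · rw [h.1, h.2, sub_self]
    · rw [sub_zero]
  refine ⟨R', hR'0, isMonge_iff_secondDiff_nonneg.2 fun a b ha hb => ?_, ?_, u, v, hu, hv,
    by simp only [R']; abel⟩
  · rw [hdiff a b ha hb]
    split_ifs
    · exact le_rfl
    · exact isMonge_iff_secondDiff_nonneg.1 hR a b ha hb
  · ext ⟨a, b⟩
    simp only [mongeCorners, mem_erase, mem_filter, mem_product, mem_range, ne_eq, Prod.mk.injEq]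
    constructor
    · rintro ⟨⟨ha, hb⟩, hne⟩
      rw [hdiff a b (by omega) (by omega)] at hne
      split_ifs at hne with h
      · exact absurd rfl hne
      · exact ⟨h, ⟨ha, hb⟩, hne⟩
    · rintro ⟨h, ⟨ha, hb⟩, hne⟩
      rw [hdiff a b (by omega) (by omega), if_neg h]
      exact ⟨⟨ha, hb⟩, hne⟩

local notation "𝒦" => PointedCone.hull ℝ (Vpq p q)

theorem mem_hull_of_one_div_smul_mem {C : Matrix (Fin p) (Fin q) ℝ} {c : ℝ} (hc : 0 < c)
    (hC : (1 / c) • C ∈ Vpq p q) : C ∈ 𝒦 := by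
  rw [← smul_inv_smul₀ hc.ne' C, ← one_div]
  exact PointedCone.smul_mem _ hc.le (PointedCone.subset_hull hC)

theorem NE_mem_hull {a b : ℕ} (ha : a ∈ Ico 1 p) (hb : b ∈ Ico 1 q) : NE p q a b ∈ 𝒦 :=
  mem_hull_of_one_div_smul_mem (c := a * b)
    (mul_pos (Nat.cast_pos.2 (mem_Ico.1 ha).1) (Nat.cast_pos.2 (mem_Ico.1 hb).1))
    (Or.inl (Or.inl (Or.inl ⟨a, ha, b, hb, rfl⟩)))

theorem SW_mem_hull {a b : ℕ} (ha : a ∈ Ico 1 p) (hb : b ∈ Ico 1 q) : SW p q a b ∈ 𝒦 :=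
  mem_hull_of_one_div_smul_mem (c := a * b)
    (mul_pos (Nat.cast_pos.2 (mem_Ico.1 ha).1) (Nat.cast_pos.2 (mem_Ico.1 hb).1))
    (Or.inl (Or.inl (Or.inr ⟨a, ha, b, hb, rfl⟩)))

theorem HOR_mem_hull (hq : 0 < q) {i : ℕ} (hi : i ∈ Icc 1 p) : HOR p q i ∈ 𝒦 :=
  mem_hull_of_one_div_smul_mem (c := q) (Nat.cast_pos.2 hq) (Or.inl (Or.inr ⟨i, hi, rfl⟩))

theorem VER_mem_hull (hp : 0 < p) {j : ℕ} (hj : j ∈ Icc 1 q) : VER p q j ∈ 𝒦 :=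
  mem_hull_of_one_div_smul_mem (c := p) (Nat.cast_pos.2 hp) (Or.inr ⟨j, hj, rfl⟩)

theorem of_add_mem_hull (hp : 0 < p) (hq : 0 < q) {r : Fin p → ℝ} {c : Fin q → ℝ}
    (hr : ∀ k, 0 ≤ r k) (hc : ∀ l, 0 ≤ c l) : Matrix.of (fun k l => r k + c l) ∈ 𝒦 := by
  have : Matrix.of (fun k l => r k + c l) =
      ∑ k, r k • HOR p q (k + 1) + ∑ l, c l • VER p q (l + 1) := by
    ext k l
    simp [HOR, VER, Matrix.sum_apply, Fin.val_inj]
  rw [this]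
  refine add_mem (sum_mem fun k _ => PointedCone.smul_mem _ (hr k) (HOR_mem_hull hq ?_))
    (sum_mem fun l _ => PointedCone.smul_mem _ (hc l) (VER_mem_hull hp ?_))
  · simp [Nat.succ_le_of_lt k.isLt]
  · simp [Nat.succ_le_of_lt l.isLt]

theorem mem_hull_of_secondDiff_eq_zero (hp : 0 < p) (hq : 0 < q) {R : Matrix (Fin p) (Fin q) ℝ}
    (hR0 : ∀ k l, 0 ≤ R k l)
    (hR : ∀ a b, a + 1 < p → b + 1 < q → secondDiff (natEntry R) a b = 0) : R ∈ 𝒦 := by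
  let k₀ : Fin p := ⟨0, hp⟩
  let l₀ : Fin q := ⟨0, hq⟩
  have hadd (k : Fin p) (l : Fin q) : R k l + R k₀ l₀ = R k l₀ + R k₀ l := by
    have := sum_Ico_sum_Ico_secondDiff (natEntry R) (Nat.zero_le k) (Nat.zero_le l)
    rw [sum_eq_zero fun a ha => sum_eq_zero fun b hb => hR a b (by rw [mem_Ico] at ha; omega)
      (by rw [mem_Ico] at hb; omega)] at this
    simp only [natEntry_of_lt R hp hq, natEntry_of_lt R hp l.isLt, natEntry_of_lt R k.isLt hq,
      natEntry_val, Fin.eta] at this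
    linarith
  obtain ⟨kmin, -, hmin⟩ := exists_min_image univ (fun k => R k l₀) ⟨k₀, mem_univ _⟩
  have hR_eq : R = Matrix.of fun k l => (R k l₀ - R kmin l₀) + R kmin l := by
    ext k l
    simp only [Matrix.of_apply]
    linarith [hadd k l, hadd kmin l]
  rw [hR_eq]
  exact of_add_mem_hull hp hq (fun k => sub_nonneg.2 (hmin k (mem_univ _))) (hR0 kmin)

theorem mem_hull_of_nonneg_of_isMonge (hp : 0 < p) (hq : 0 < q) {R : Matrix (Fin p) (Fin q) ℝ}
    (hR0 : ∀ k l, 0 ≤ R k l) (hR : IsMonge R) : R ∈ 𝒦 := by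
  induction hn : #(mongeCorners R) using Nat.strong_induction_on generalizing R with
  | _ n ih =>
    obtain hempty | ⟨⟨i, j⟩, hij⟩ := (mongeCorners R).eq_empty_or_nonempty
    · refine mem_hull_of_secondDiff_eq_zero hp hq hR0 fun a b ha hb => ?_
      by_contra hne
      have : (a, b) ∈ mongeCorners R := by
        simp only [mongeCorners, mem_filter, mem_product, mem_range]
        exact ⟨⟨by omega, by omega⟩, hne⟩
      simp [hempty] at this
    · have hbounds := hij
      simp only [mongeCorners, mem_filter, mem_product, mem_range] at hbounds
      obtain ⟨R', hR'0, hR', hcorners, u, v, hu, hv, rfl⟩ := exists_peel_corner hR0 hR hij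
      have hlt : #(mongeCorners R') < n := hn ▸ hcorners ▸ card_erase_lt_of_mem hij
      refine add_mem (add_mem (ih _ hlt hR'0 hR' rfl) (PointedCone.smul_mem _ hu ?_))
        (PointedCone.smul_mem _ hv ?_)
      · exact NE_mem_hull (mem_Ico.2 ⟨by omega, by omega⟩)
          (mem_Ico.2 ⟨by omega, by omega⟩)
      · exact SW_mem_hull (mem_Ico.2 ⟨by omega, by omega⟩)
          (mem_Ico.2 ⟨by omega, by omega⟩)

end MongeMatrices

/-- The Monge polytope `M_{p×q}` equals the convex hull of the vertex set `Vpq`. -/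
theorem monge_polytope_eq_convexHull (p q : ℕ) (hp : 2 ≤ p) (hq : 2 ≤ q) :
    Mpq p q = convexHull ℝ (Vpq p q) := by
  have hV : Vpq p q ⊆ Mpq p q := Vpq_subset_Mpq (by omega) (by omega)
  refine subset_antisymm (fun C ⟨hC0, hC1, hC⟩ => ?_) (convexHull_min hV convex_Mpq)
  exact mem_convexHull_of_mem_pointedConeHull (entrySum p q) (fun M hM => (hV hM).2.1)
    (mem_hull_of_nonneg_of_isMonge (by omega) (by omega) hC0 hC) hC1
end
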